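/- arXiv:1306.3249 — 5 statements merged into one kernel-verified Lean document; each statement's English description precedes it below -/
import Mathlib

section
/- Let E be a finite-dimensional real vector space, π₀ : E* → E a skew-symmetric linear map, and Q : E → E a linear automorphism with Q ∘ π₀ ∘ Qᵀ = π₀, where Qᵀ : E* → E* is the transpose of Q. Let W_per = { (λ,φ) ∈ W(E) : λ(1) = Q(λ(0)) and φ(0) = Qᵀ(φ(1)) } and V_per = { (λ,φ) ∈ W_per : λ(u) = λ(0) − π₀(∫₀ᵘ φ(s) ds) for all u ∈ [0,1] }. Then the Ω-orthogonal of V_per taken within W_per is contained in V_per; that is, V_per is coisotropic in (W_per, Ω). -/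
open MeasureTheory Set

/-- An element of `W(E)`: a pair `(λ, φ)` of continuous maps on `[0,1]` with values in `E`
and in the dual `E* = E →L[ℝ] ℝ` respectively. -/
structure WPair (E : Type*) [NormedAddCommGroup E] [NormedSpace ℝ E] where
  lam : ℝ → E
  phi : ℝ → E →L[ℝ] ℝ
  lam_cont : ContinuousOn lam (Icc 0 1)
  phi_cont : ContinuousOn phi (Icc 0 1)

/-- The alternating bilinear form `Ω((λ,φ),(λ',φ')) = ∫₀¹ (φ(u)(λ'(u)) − φ'(u)(λ(u))) du`. -/
noncomputable def Omega {E : Type*} [NormedAddCommGroup E] [NormedSpace ℝ E]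
    (w w' : WPair E) : ℝ :=
  ∫ u in (0:ℝ)..(1:ℝ), (w.phi u (w'.lam u) - w'.phi u (w.lam u))

/-- The `Ω`-orthogonal of a subset `A` taken within a subset `W'` of `W(E)`. -/
def orthWithin {E : Type*} [NormedAddCommGroup E] [NormedSpace ℝ E]
    (W' A : Set (WPair E)) : Set (WPair E) :=
  {w ∈ W' | ∀ a ∈ A, Omega a w = 0}

/-- The "periodic" (twisted by the monodromy `Q`) subspace `W_per` of `W(E)`. -/
def WPer {E : Type*} [NormedAddCommGroup E] [NormedSpace ℝ E]
    (Q : E ≃L[ℝ] E) : Set (WPair E) :=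
  {w | w.lam 1 = Q (w.lam 0) ∧ w.phi 0 = (w.phi 1).comp (Q : E →L[ℝ] E)}

/-- The subspace `V_per ⊆ W_per` of solutions of `λ(u) = λ(0) − π₀ ∫₀ᵘ φ`. -/
noncomputable def VPer {E : Type*} [NormedAddCommGroup E] [NormedSpace ℝ E]
    (π₀ : (E →L[ℝ] ℝ) →ₗ[ℝ] E) (Q : E ≃L[ℝ] E) : Set (WPair E) :=
  {w ∈ WPer Q | ∀ u ∈ Icc (0:ℝ) 1, w.lam u = w.lam 0 - π₀ (∫ s in (0:ℝ)..u, w.phi s)}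

/-!
Test an element `w = (λ, φ)` of the `Ω`-orthogonal against the pairs `(-F • π₀ α, f • α)`, where
`f` vanishes at both ends and `F = ∫₀ᵘ f` vanishes at `1`: these lie in `V_per` whatever `Q` is.
Integrating by parts, `Ω = 0` says `∫₀¹ f k_α = 0` with `k_α(u) = α(λ u) - (∫₀ᵘ φ)(π₀ α)`, so by the
du Bois-Reymond lemma `k_α` is constant. By skew-symmetry `k_α(u) = k_α(0)` reads
`α (λ u + π₀ ∫₀ᵘ φ) = α (λ 0)`, and continuous functionals separate points.
-/
section Primitive

variable {F : Type*} [NormedAddCommGroup F] [NormedSpace ℝ F] {f : ℝ → F} {a b : ℝ}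

theorem ContinuousOn.hasDerivAt_primitive_of_mem_Ioo [CompleteSpace F]
    (hf : ContinuousOn f (Icc a b)) {x : ℝ} (hx : x ∈ Ioo a b) :
    HasDerivAt (fun u => ∫ s in a..u, f s) (f x) x :=
  intervalIntegral.integral_hasDerivAt_right
    ((hf.mono (Icc_subset_Icc_right hx.2.le)).intervalIntegrable_of_Icc hx.1.le)
    ((hf.mono Ioo_subset_Icc_self).stronglyMeasurableAtFilter isOpen_Ioo x hx)
    (hf.continuousAt (Icc_mem_nhds hx.1 hx.2))

theorem ContinuousOn.continuousOn_primitive (hf : ContinuousOn f (Icc a b)) (hab : a ≤ b) :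
    ContinuousOn (fun u => ∫ s in a..u, f s) (Icc a b) := by
  simpa only [uIcc_of_le hab] using intervalIntegral.continuousOn_primitive_interval
    (hf.integrableOn_Icc.mono_set (uIcc_of_le hab).subset)

end Primitive

theorem integral_primitive_mul {f g : ℝ → ℝ} {a b : ℝ} (hab : a ≤ b)
    (hf : ContinuousOn f (Icc a b)) (hg : ContinuousOn g (Icc a b)) :
    ∫ u in a..b, (∫ s in a..u, f s) * g u =
      (∫ s in a..b, f s) * (∫ s in a..b, g s) - ∫ u in a..b, f u * ∫ s in a..u, g s := by
  have h := intervalIntegral.integral_mul_deriv_eq_deriv_mul_of_hasDerivAt (a := a) (b := b)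
    (uIcc_of_le hab ▸ hf.continuousOn_primitive hab)
    (uIcc_of_le hab ▸ hg.continuousOn_primitive hab)
    (fun x hx => hf.hasDerivAt_primitive_of_mem_Ioo (by simpa [hab] using hx))
    (fun x hx => hg.hasDerivAt_primitive_of_mem_Ioo (by simpa [hab] using hx))
    (hf.intervalIntegrable_of_Icc hab) (hg.intervalIntegrable_of_Icc hab)
  simpa using h

theorem ContinuousOn.eqOn_const_of_integral_mul_eq_zero {k : ℝ → ℝ}
    (hk : ContinuousOn k (Icc 0 1))
    (H : ∀ f : ℝ → ℝ, ContinuousOn f (Icc 0 1) → f 0 = 0 → f 1 = 0 →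
      ∫ u in (0:ℝ)..1, f u = 0 → ∫ u in (0:ℝ)..1, f u * k u = 0) :
    EqOn k (fun _ => k 0) (Icc 0 1) := by
  have hI : ∀ g : ℝ → ℝ, ContinuousOn g (Icc 0 1) → IntervalIntegrable g volume 0 1 :=
    fun g hg => hg.intervalIntegrable_of_Icc zero_le_one
  set ρ : ℝ → ℝ := fun u => 6 * (u - u ^ 2)
  have hρ : ContinuousOn ρ (Icc 0 1) := by fun_prop
  have hρ_int : ∫ u in (0:ℝ)..1, ρ u = 1 := by
    norm_num [ρ, intervalIntegral.integral_const_mul, intervalIntegral.integral_sub, integral_id,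
      integral_pow]
  set d := ∫ u in (0:ℝ)..1, ρ u * k u
  have hρk : ContinuousOn (fun u => ρ u * (k u - d)) (Icc 0 1) :=
    hρ.mul (hk.sub continuousOn_const)
  -- since `∫ ρ = 1`, the weight `ρ (k - d)` has mean zero, so testing against it is allowed
  have h_mean : ∫ u in (0:ℝ)..1, ρ u * (k u - d) = 0 := by
    simp_rw [mul_sub]
    rw [intervalIntegral.integral_sub (hI (fun u => ρ u * k u) (hρ.mul hk))
      (hI (fun u => ρ u * d) (hρ.mul continuousOn_const)),
      intervalIntegral.integral_mul_const, hρ_int]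
    ring
  have h_sq : ∫ u in (0:ℝ)..1, ρ u * (k u - d) ^ 2 = 0 := by
    have h_test := H _ hρk (by simp [ρ]) (by simp [ρ]) h_mean
    calc ∫ u in (0:ℝ)..1, ρ u * (k u - d) ^ 2
        = ∫ u in (0:ℝ)..1, ρ u * (k u - d) * k u - d * (ρ u * (k u - d)) := by
          congr 1; funext u; ring
      _ = 0 := by
          rw [intervalIntegral.integral_sub (hI (fun u => ρ u * (k u - d) * k u) (hρk.mul hk))
            (hI (fun u => d * (ρ u * (k u - d))) (continuousOn_const.mul hρk)),
            intervalIntegral.integral_const_mul, h_test, h_mean]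
          ring
  have h_zero : ∀ x ∈ Icc (0:ℝ) 1, ρ x * (k x - d) ^ 2 = 0 := by
    have h_nonneg : ∀ x ∈ Icc (0:ℝ) 1, 0 ≤ ρ x * (k x - d) ^ 2 := fun x hx =>
      mul_nonneg (by nlinarith [hx.1, hx.2]) (sq_nonneg _)
    intro x hx
    by_contra hne
    refine (intervalIntegral.integral_pos zero_lt_one (hρ.mul ((hk.sub continuousOn_const).pow 2))
      (fun y hy => h_nonneg y (Ioc_subset_Icc_self hy))
      ⟨x, hx, (h_nonneg x hx).lt_of_ne' hne⟩).ne' h_sq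
  have h_Ioo : EqOn k (fun _ => d) (Ioo 0 1) := fun x hx => by
    have hρx : ρ x ≠ 0 := by simp only [ρ]; nlinarith [hx.1, hx.2]
    simpa [hρx, sub_eq_zero] using h_zero x (Ioo_subset_Icc_self hx)
  have h_Icc := h_Ioo.of_subset_closure hk continuousOn_const Ioo_subset_Icc_self
    (by rw [closure_Ioo zero_ne_one])
  exact fun u hu => (h_Icc hu).trans (h_Icc (left_mem_Icc.2 zero_le_one)).symm

section TestPair

variable {E : Type*} [NormedAddCommGroup E] [NormedSpace ℝ E]
  (π₀ : (E →L[ℝ] ℝ) →ₗ[ℝ] E) (α : E →L[ℝ] ℝ) {f : ℝ → ℝ}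

noncomputable def testPair (hf : ContinuousOn f (Icc 0 1)) : WPair E where
  lam u := -((∫ s in (0:ℝ)..u, f s) • π₀ α)
  phi u := f u • α
  lam_cont := ((hf.continuousOn_primitive zero_le_one).smul continuousOn_const).neg
  phi_cont := hf.smul continuousOn_const

theorem testPair_mem_VPer (Q : E ≃L[ℝ] E) (hf : ContinuousOn f (Icc 0 1)) (h0 : f 0 = 0)
    (h1 : f 1 = 0) (h_int : ∫ u in (0:ℝ)..1, f u = 0) : testPair π₀ α hf ∈ VPer π₀ Q := by
  refine ⟨⟨?_, ?_⟩, fun u _ => ?_⟩ <;>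
    simp [testPair, h0, h1, h_int, intervalIntegral.integral_smul_const]

theorem Omega_testPair (hf : ContinuousOn f (Icc 0 1)) (h_int : ∫ u in (0:ℝ)..1, f u = 0)
    (w : WPair E) :
    Omega (testPair π₀ α hf) w =
      ∫ u in (0:ℝ)..1, f u * (α (w.lam u) - (∫ s in (0:ℝ)..u, w.phi s) (π₀ α)) := by
  have hg : ContinuousOn (fun u => w.phi u (π₀ α)) (Icc 0 1) :=
    w.phi_cont.clm_apply continuousOn_const
  have hf_lam : ContinuousOn (fun u => f u * α (w.lam u)) (Icc 0 1) :=
    hf.mul (α.continuous.comp_continuousOn w.lam_cont)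
  have hfG : ContinuousOn (fun u => f u * ∫ s in (0:ℝ)..u, w.phi s (π₀ α)) (Icc 0 1) :=
    hf.mul (hg.continuousOn_primitive zero_le_one)
  have hFg : ContinuousOn (fun u => (∫ s in (0:ℝ)..u, f s) * w.phi u (π₀ α)) (Icc 0 1) :=
    (hf.continuousOn_primitive zero_le_one).mul hg
  calc Omega (testPair π₀ α hf) w
      = ∫ u in (0:ℝ)..1, f u * α (w.lam u) + (∫ s in (0:ℝ)..u, f s) * w.phi u (π₀ α) := by
        simp [Omega, testPair]
    _ = ∫ u in (0:ℝ)..1, f u * α (w.lam u) - f u * ∫ s in (0:ℝ)..u, w.phi s (π₀ α) := by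
        rw [intervalIntegral.integral_add (hf_lam.intervalIntegrable_of_Icc zero_le_one)
            (hFg.intervalIntegrable_of_Icc zero_le_one),
          integral_primitive_mul zero_le_one hf hg, h_int, zero_mul, zero_sub,
          intervalIntegral.integral_sub (hf_lam.intervalIntegrable_of_Icc zero_le_one)
            (hfG.intervalIntegrable_of_Icc zero_le_one), sub_eq_add_neg]
    _ = ∫ u in (0:ℝ)..1, f u * (α (w.lam u) - (∫ s in (0:ℝ)..u, w.phi s) (π₀ α)) := by
        refine intervalIntegral.integral_congr fun u hu => ?_
        rw [uIcc_of_le zero_le_one] at hu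
        rw [ContinuousLinearMap.intervalIntegral_apply
          ((w.phi_cont.mono (Icc_subset_Icc_right hu.2)).intervalIntegrable_of_Icc hu.1), mul_sub]

end TestPair

theorem VPer_coisotropic_general
    (E : Type*) [NormedAddCommGroup E] [NormedSpace ℝ E]
    (π₀ : (E →L[ℝ] ℝ) →ₗ[ℝ] E)
    (hskew : ∀ α β : E →L[ℝ] ℝ, α (π₀ β) = - β (π₀ α))
    (Q : E ≃L[ℝ] E) :
    orthWithin (WPer Q) (VPer π₀ Q) ⊆ VPer π₀ Q := by
  rintro w ⟨hwW, horth⟩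
  refine ⟨hwW, fun u hu => (SeparatingDual.eq_iff_forall_dual_eq (R := ℝ)).2 fun α => ?_⟩
  have hk : ContinuousOn (fun u => α (w.lam u) - (∫ s in (0:ℝ)..u, w.phi s) (π₀ α)) (Icc 0 1) :=
    (α.continuous.comp_continuousOn w.lam_cont).sub
      ((w.phi_cont.continuousOn_primitive zero_le_one).clm_apply continuousOn_const)
  have h_const := hk.eqOn_const_of_integral_mul_eq_zero (fun f hf h0 h1 h_int => by
    rw [← Omega_testPair π₀ α hf h_int w]
    exact horth _ (testPair_mem_VPer π₀ α Q hf h0 h1 h_int)) hu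
  simp only [intervalIntegral.integral_same, zero_apply, sub_zero] at h_const
  rw [map_sub, hskew, ← h_const]
  ring

theorem VPer_coisotropic
    (E : Type*) [NormedAddCommGroup E] [NormedSpace ℝ E] [FiniteDimensional ℝ E]
    (π₀ : (E →L[ℝ] ℝ) →ₗ[ℝ] E)
    (hskew : ∀ α β : E →L[ℝ] ℝ, α (π₀ β) = - β (π₀ α))
    (Q : E ≃L[ℝ] E)
    (hQ : ∀ α : E →L[ℝ] ℝ, Q (π₀ (α.comp (Q : E →L[ℝ] E))) = π₀ α) :
    orthWithin (WPer Q) (VPer π₀ Q) ⊆ VPer π₀ Q :=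
  VPer_coisotropic_general E π₀ hskew Q
end

section
/- Let E be a finite-dimensional real vector space, T ⊆ E a linear subspace with annihilator N = { α ∈ E* : α vanishes on T }, and π : E* → E a skew-symmetric linear map (i.e. α(π(β)) = −β(π(α)) for all α, β ∈ E*). Then { v ∈ E : α(v) = 0 for every α ∈ E* with π(α) ∈ T } = π(N). -/
/-! Skew-symmetry of `π` turns `β (π α) = 0` into `α (π β) = 0`, so the covectors `α` with
`π α ∈ T` are exactly those annihilating `π(N)`; passing back from annihilators, which is
lossless for subspaces of a vector space (`W` is the common kernel of the covectors vanishing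
on it), identifies the left-hand side with `π(N)`. -/

namespace Submodule

variable {R M : Type*} [CommRing R] [AddCommGroup M] [Module R M]

theorem dualAnnihilator_map_eq_comap_dualCoannihilator_of_skew
    {π : Module.Dual R M →ₗ[R] M} (hskew : ∀ α β : Module.Dual R M, α (π β) = -β (π α))
    (U : Submodule R (Module.Dual R M)) :
    (U.map π).dualAnnihilator = U.dualCoannihilator.comap π := by
  ext α
  simp only [mem_dualAnnihilator, mem_comap, mem_dualCoannihilator, mem_map,
    forall_exists_index, and_imp, forall_apply_eq_imp_iff₂]
  exact forall₂_congr fun β _ => by rw [hskew, neg_eq_zero]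

end Submodule

theorem annihilated_by_preimage_eq_image_annihilator_general
    (E : Type*) [AddCommGroup E] [Module ℝ E]
    (T : Submodule ℝ E)
    (π : Module.Dual ℝ E →ₗ[ℝ] E)
    (hskew : ∀ α β : Module.Dual ℝ E, α (π β) = - β (π α)) :
    {v : E | ∀ α : Module.Dual ℝ E, π α ∈ T → α v = 0} =
      π '' {α : Module.Dual ℝ E | ∀ t ∈ T, α t = 0} := by
  have hpreimage : T.comap π = (T.dualAnnihilator.map π).dualAnnihilator := by
    rw [Submodule.dualAnnihilator_map_eq_comap_dualCoannihilator_of_skew hskew,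
      Subspace.dualAnnihilator_dualCoannihilator_eq]
  calc {v : E | ∀ α : Module.Dual ℝ E, π α ∈ T → α v = 0}
      = ((T.comap π).dualCoannihilator : Set E) := by
        ext v
        simp [Submodule.mem_dualCoannihilator]
    _ = (T.dualAnnihilator.map π : Set E) := by
        rw [hpreimage, Subspace.dualAnnihilator_dualCoannihilator_eq]
    _ = π '' {α : Module.Dual ℝ E | ∀ t ∈ T, α t = 0} := by
        rw [Submodule.map_coe]
        congr with α
        exact Submodule.mem_dualAnnihilator α

/-- For a skew-symmetric `π : E* → E` on a finite-dimensional real vector space and a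
subspace `T ⊆ E` with annihilator `N`, the set of vectors annihilated by every covector
`α` with `π(α) ∈ T` equals `π(N)`. -/
theorem annihilated_by_preimage_eq_image_annihilator
    (E : Type*) [AddCommGroup E] [Module ℝ E] [FiniteDimensional ℝ E]
    (T : Submodule ℝ E)
    (π : Module.Dual ℝ E →ₗ[ℝ] E)
    (hskew : ∀ α β : Module.Dual ℝ E, α (π β) = - β (π α)) :
    {v : E | ∀ α : Module.Dual ℝ E, π α ∈ T → α v = 0} =
      π '' {α : Module.Dual ℝ E | ∀ t ∈ T, α t = 0} :=
  annihilated_by_preimage_eq_image_annihilator_general E T π hskew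
end

section
/- Let K be a field, S a K-vector space, and ω an alternating bilinear form on S. Let W ⊆ V ⊆ S be linear subspaces with W coisotropic (W^⊥ ⊆ W), so that V^⊥ ⊆ W^⊥ ⊆ W ⊆ V. Then: (i) the formula ω̄(v + V^⊥, v' + V^⊥) = ω(v, v') defines a well-defined alternating bilinear form on the quotient V / V^⊥; (ii) the ω̄-orthogonal in V / V^⊥ of the image W/V^⊥ of W equals the image W^⊥/V^⊥ of W^⊥, so in particular W/V^⊥ is coisotropic in (V/V^⊥, ω̄); and (iii) there is a linear isomorphism between W / W^⊥ and (W/V^⊥) / (W^⊥/V^⊥). -/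
/-!
Because `ω` is alternating, `V^⊥` lies in both radicals of `ω` restricted to `V`, so `ω` descends
to `V/V^⊥`. Orthogonality in the quotient is tested on representatives, and `V^⊥ ⊆ W^⊥`, so the
orthogonal of `W/V^⊥` is `W^⊥/V^⊥`. Finally `W → (W/V^⊥)/(W^⊥/V^⊥)` is onto, and its kernel
consists of the elements of `W` lying in `W^⊥ + V^⊥ = W^⊥`.
-/

/-- The `ω`-orthogonal of a submodule, as a submodule. -/
def omegaOrthSub {K S : Type*} [Field K] [AddCommGroup S] [Module K S]
    (ω : S →ₗ[K] S →ₗ[K] K) (A : Submodule K S) : Submodule K S where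
  carrier := {s | ∀ a ∈ A, ω s a = 0}
  add_mem' hx hy := fun a ha => by simp [hx a ha, hy a ha]
  zero_mem' := fun a ha => by simp
  smul_mem' c x hx := fun a ha => by simp [hx a ha]

open Submodule LinearMap

section Orthogonal

variable {K S : Type*} [Field K] [AddCommGroup S] [Module K S] (ω : S →ₗ[K] S →ₗ[K] K)

theorem omegaOrthSub_anti {A B : Submodule K S} (h : A ≤ B) :
    omegaOrthSub ω B ≤ omegaOrthSub ω A :=
  fun _ hs a ha => hs a (h ha)

theorem omegaOrthSub_top : omegaOrthSub ω ⊤ = LinearMap.ker ω := by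
  ext s
  simp [omegaOrthSub, LinearMap.ext_iff]

theorem omegaOrthSub_domRestrict₁₂ {A V : Submodule K S} (h : A ≤ V) :
    omegaOrthSub (ω.domRestrict₁₂ V V) (A.comap V.subtype) =
      (omegaOrthSub ω A).comap V.subtype := by
  ext v
  exact ⟨fun hv a ha => hv ⟨a, h ha⟩ ha, fun hv a ha => hv a ha⟩

theorem omegaOrthSub_liftQ₂_map_mkQ (hω : ω.IsRefl) {N : Submodule K S}
    (hN : N ≤ LinearMap.ker ω) (P : Submodule K S) :
    omegaOrthSub (hω.liftQ₂ ω N hN) (P.map N.mkQ) = (omegaOrthSub ω P).map N.mkQ := by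
  have hNP : N ≤ omegaOrthSub ω P := fun x hx a _ => by
    simp [LinearMap.mem_ker.mp (hN hx)]
  ext q
  induction q using Submodule.Quotient.induction_on with | H x => ?_
  change _ ↔ x ∈ ((omegaOrthSub ω P).map N.mkQ).comap N.mkQ
  rw [comap_map_mkQ, sup_eq_right.mpr hNP]
  simp [omegaOrthSub]

end Orthogonal

theorem exists_quotient_linearEquiv_subquotient {R M V : Type*} [Ring R] [AddCommGroup M]
    [Module R M] [AddCommGroup V] [Module R V] (f : M →ₗ[R] V) {N C A : Submodule R V}
    {T : Submodule R M} (hNC : N ≤ C) (hA : LinearMap.range f = A) (hT : C.comap f = T) :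
    ∃ e : (M ⧸ T) ≃ₗ[R] (↥(A.map N.mkQ) ⧸ (C.map N.mkQ).comap (A.map N.mkQ).subtype),
      ∀ x, e (Submodule.Quotient.mk x) = Submodule.Quotient.mk
        ⟨N.mkQ (f x), hA ▸ mem_map_of_mem (LinearMap.mem_range_self f x)⟩ := by
  set φ : M →ₗ[R] A.map N.mkQ := (N.mkQ ∘ₗ f).codRestrict _
    fun x => hA ▸ mem_map_of_mem (LinearMap.mem_range_self f x)
  set g := ((C.map N.mkQ).comap (A.map N.mkQ).subtype).mkQ ∘ₗ φ
  have hg : Function.Surjective g := by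
    refine (Submodule.mkQ_surjective _).comp ?_
    rintro ⟨_, v, hv, rfl⟩
    rw [← hA] at hv
    obtain ⟨x, rfl⟩ := hv
    exact ⟨x, rfl⟩
  have hker : T = LinearMap.ker g := by
    ext x
    rw [← hT, LinearMap.ker_comp, ker_mkQ]
    change f x ∈ C ↔ f x ∈ (C.map N.mkQ).comap N.mkQ
    rw [comap_map_mkQ, sup_eq_right.mpr hNC]
  exact ⟨(quotEquivOfEq _ _ hker).trans (g.quotKerEquivOfSurjective hg), fun _ => rfl⟩

theorem reduction_in_stages_two_three_general
    (K S : Type*) [Field K] [AddCommGroup S] [Module K S]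
    (ω : S →ₗ[K] S →ₗ[K] K) (halt : ∀ s : S, ω s s = 0)
    (V W : Submodule K S) (hWV : W ≤ V) :
    ∃ ωbar : (↥V ⧸ (omegaOrthSub ω V).comap V.subtype) →ₗ[K]
             (↥V ⧸ (omegaOrthSub ω V).comap V.subtype) →ₗ[K] K,
      -- (i) well-definedness: `ω̄(v + V^⊥, v' + V^⊥) = ω(v,v')`, and `ω̄` is alternating
      (∀ v v' : ↥V, ωbar (Submodule.Quotient.mk v) (Submodule.Quotient.mk v') =
        ω (v : S) (v' : S)) ∧
      (∀ q, ωbar q q = 0) ∧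
      -- (ii) the `ω̄`-orthogonal of `W/V^⊥` in `V/V^⊥` is `W^⊥/V^⊥`
      {q | ∀ p ∈ (W.comap V.subtype).map ((omegaOrthSub ω V).comap V.subtype).mkQ,
          ωbar q p = 0} =
        ((((omegaOrthSub ω W).comap V.subtype).map
            ((omegaOrthSub ω V).comap V.subtype).mkQ : Submodule K _) : Set _) ∧
      -- (iii) `W/W^⊥` is canonically isomorphic to `(W/V^⊥)/(W^⊥/V^⊥)`
      ∃ e : (↥W ⧸ (omegaOrthSub ω W).comap W.subtype) ≃ₗ[K]
          (↥((W.comap V.subtype).map ((omegaOrthSub ω V).comap V.subtype).mkQ) ⧸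
            ((((omegaOrthSub ω W).comap V.subtype).map
                ((omegaOrthSub ω V).comap V.subtype).mkQ).comap
              ((W.comap V.subtype).map
                ((omegaOrthSub ω V).comap V.subtype).mkQ).subtype)),
        ∀ w : ↥W,
          e (Submodule.Quotient.mk w) =
            Submodule.Quotient.mk
              ⟨((omegaOrthSub ω V).comap V.subtype).mkQ ⟨(w : S), hWV w.2⟩,
                Submodule.mem_map_of_mem (show (⟨(w : S), hWV w.2⟩ : ↥V) ∈
                  W.comap V.subtype from w.2)⟩ := by
  set N := (omegaOrthSub ω V).comap V.subtype
  have hN : N ≤ LinearMap.ker (ω.domRestrict₁₂ V V) := by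
    rw [← omegaOrthSub_top, ← comap_subtype_self V, omegaOrthSub_domRestrict₁₂ ω le_rfl]
  have hωV : (ω.domRestrict₁₂ V V).IsAlt := fun v => halt v
  refine ⟨hωV.isRefl.liftQ₂ _ N hN, fun _ _ => rfl, ?_, ?_, ?_⟩
  · intro q
    induction q using Submodule.Quotient.induction_on with | H v => exact halt v
  · exact congrArg SetLike.coe ((omegaOrthSub_liftQ₂_map_mkQ _ hωV.isRefl hN _).trans
      (by rw [omegaOrthSub_domRestrict₁₂ ω hWV]))
  · exact exists_quotient_linearEquiv_subquotient (inclusion hWV)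
      (comap_mono (omegaOrthSub_anti ω hWV)) (range_inclusion _ _ hWV) rfl

/-- Parts (2) and (3) of the paper's "Reduction in stages" Lemma: `ω` descends to a
well-defined alternating bilinear form `ω̄` on `V/V^⊥`; the `ω̄`-orthogonal of `W/V^⊥`
is `W^⊥/V^⊥` (so `W/V^⊥` is coisotropic); and `W/W^⊥ ≅ (W/V^⊥)/(W^⊥/V^⊥)`
canonically. -/
theorem reduction_in_stages_two_three
    (K S : Type*) [Field K] [AddCommGroup S] [Module K S]
    (ω : S →ₗ[K] S →ₗ[K] K) (halt : ∀ s : S, ω s s = 0)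
    (V W : Submodule K S) (hWV : W ≤ V)
    (hW : omegaOrthSub ω W ≤ W)
    (hVpV : omegaOrthSub ω V ≤ V) (hVpWp : omegaOrthSub ω V ≤ omegaOrthSub ω W) :
    ∃ ωbar : (↥V ⧸ (omegaOrthSub ω V).comap V.subtype) →ₗ[K]
             (↥V ⧸ (omegaOrthSub ω V).comap V.subtype) →ₗ[K] K,
      -- (i) well-definedness: `ω̄(v + V^⊥, v' + V^⊥) = ω(v,v')`, and `ω̄` is alternating
      (∀ v v' : ↥V, ωbar (Submodule.Quotient.mk v) (Submodule.Quotient.mk v') =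
        ω (v : S) (v' : S)) ∧
      (∀ q, ωbar q q = 0) ∧
      -- (ii) the `ω̄`-orthogonal of `W/V^⊥` in `V/V^⊥` is `W^⊥/V^⊥`
      {q | ∀ p ∈ (W.comap V.subtype).map ((omegaOrthSub ω V).comap V.subtype).mkQ,
          ωbar q p = 0} =
        ((((omegaOrthSub ω W).comap V.subtype).map
            ((omegaOrthSub ω V).comap V.subtype).mkQ : Submodule K _) : Set _) ∧
      -- (iii) `W/W^⊥` is canonically isomorphic to `(W/V^⊥)/(W^⊥/V^⊥)`
      ∃ e : (↥W ⧸ (omegaOrthSub ω W).comap W.subtype) ≃ₗ[K]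
          (↥((W.comap V.subtype).map ((omegaOrthSub ω V).comap V.subtype).mkQ) ⧸
            ((((omegaOrthSub ω W).comap V.subtype).map
                ((omegaOrthSub ω V).comap V.subtype).mkQ).comap
              ((W.comap V.subtype).map
                ((omegaOrthSub ω V).comap V.subtype).mkQ).subtype)),
        ∀ w : ↥W,
          e (Submodule.Quotient.mk w) =
            Submodule.Quotient.mk
              ⟨((omegaOrthSub ω V).comap V.subtype).mkQ ⟨(w : S), hWV w.2⟩,
                Submodule.mem_map_of_mem (show (⟨(w : S), hWV w.2⟩ : ↥V) ∈
                  W.comap V.subtype from w.2)⟩ :=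
  reduction_in_stages_two_three_general K S ω halt V W hWV
end

section
/- Let n ≥ 1 and let π : ℝⁿ → Mₙ(ℝ) be smooth with π(x) skew-symmetric for all x ∈ ℝⁿ and satisfying the Jacobi identity Σ_{r=1}^n ( π^{rs}(x) ∂_r π^{lk}(x) + π^{rk}(x) ∂_r π^{sl}(x) + π^{rl}(x) ∂_r π^{ks}(x) ) = 0 for all x and all indices s,l,k (i.e. π is a Poisson bivector field). Let X : [0,1] → ℝⁿ be continuously differentiable and η : [0,1] → ℝⁿ continuous with (X')ⁱ(u) + Σ_j η_j(u) π^{ji}(X(u)) = 0 for all u and i. Let A : [0,1] → Mₙ(ℝ) be the continuous matrix-valued map with entries A(u)ⁱ_k = Σ_j η_j(u) ∂_k π^{ji}(X(u)), and let U : [0,1] → Mₙ(ℝ) be the solution of U(0) = I and U'(u) = U(u)·A(u). Then U(u)·π(X(u))·U(u)ᵀ = π(X(0)) for all u ∈ [0,1]. -/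
open MeasureTheory Set

/-- Partial derivative `∂_r f(x)` of a function `f : ℝⁿ → ℝ` in the `r`-th coordinate
direction. -/
noncomputable def pd {n : ℕ} (f : (Fin n → ℝ) → ℝ) (r : Fin n) (x : Fin n → ℝ) : ℝ :=
  fderiv ℝ f x (Pi.single r 1)

/-- `(X, η)` (with `X'` the derivative of `X`) is an element of `Sol(π)`:
`X : [0,1] → ℝⁿ` is continuously differentiable, `η : [0,1] → ℝⁿ` is continuous, and
`(X')ⁱ(u) + Σ_j η_j(u) π^{ji}(X(u)) = 0` on `[0,1]`. -/
def IsSol {n : ℕ} (π : (Fin n → ℝ) → Fin n → Fin n → ℝ)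
    (X X' η : ℝ → Fin n → ℝ) : Prop :=
  ContinuousOn X' (Icc 0 1) ∧ ContinuousOn η (Icc 0 1) ∧
  (∀ u ∈ Icc (0:ℝ) 1, HasDerivWithinAt X (X' u) (Icc 0 1) u) ∧
  (∀ u ∈ Icc (0:ℝ) 1, ∀ i, X' u i + ∑ j, η u j * π (X u) j i = 0)

/-- `(ξ, e)` (with `ξ'` the derivative of `ξ`) is an element of the tangent space
`Tan(X,η)`: `ξ` is continuously differentiable, `e` is continuous, and the linearized
equation `(ξ')ⁱ + Σ_{j,l} η_j ∂_l π^{ji}(X) ξˡ + Σ_j e_j π^{ji}(X) = 0` holds on `[0,1]`. -/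
def IsTan {n : ℕ} (π : (Fin n → ℝ) → Fin n → Fin n → ℝ)
    (X η ξ ξ' e : ℝ → Fin n → ℝ) : Prop :=
  ContinuousOn ξ' (Icc 0 1) ∧ ContinuousOn e (Icc 0 1) ∧
  (∀ u ∈ Icc (0:ℝ) 1, HasDerivWithinAt ξ (ξ' u) (Icc 0 1) u) ∧
  (∀ u ∈ Icc (0:ℝ) 1, ∀ i,
    ξ' u i + (∑ j, ∑ l, η u j * pd (fun y => π y j i) l (X u) * ξ u l)
      + ∑ j, e u j * π (X u) j i = 0)

/-- The pairing `Ω((ξ,e),(ξ̃,ẽ)) = ∫₀¹ Σ_i ( e_i(u) ξ̃ⁱ(u) − ẽ_i(u) ξⁱ(u) ) du`. -/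
noncomputable def OmegaFd {n : ℕ} (ξ e ξt et : ℝ → Fin n → ℝ) : ℝ :=
  ∫ u in (0:ℝ)..(1:ℝ), ∑ i, (e u i * ξt u i - et u i * ξ u i)

/-- `Sol(π)` is coisotropic: for every solution `(X,η)`, every continuously
differentiable `ξ̃` and continuous `ẽ` with `Ω((ξ,e),(ξ̃,ẽ)) = 0` for all
`(ξ,e) ∈ Tan(X,η)` belong to `Tan(X,η)`. -/
def SolCoisotropic {n : ℕ} (π : (Fin n → ℝ) → Fin n → Fin n → ℝ) : Prop :=
  ∀ X X' η : ℝ → Fin n → ℝ, IsSol π X X' η →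
    ∀ ξt ξt' et : ℝ → Fin n → ℝ,
      ContinuousOn ξt' (Icc 0 1) → ContinuousOn et (Icc 0 1) →
      (∀ u ∈ Icc (0:ℝ) 1, HasDerivWithinAt ξt (ξt' u) (Icc 0 1) u) →
      (∀ ξ ξ' e : ℝ → Fin n → ℝ, IsTan π X η ξ ξ' e → OmegaFd ξ e ξt et = 0) →
      IsTan π X η ξt ξt' et


section Aux

lemma fderiv_apply_sum {n : ℕ} (f : (Fin n → ℝ) → ℝ) (x v : Fin n → ℝ) :
    fderiv ℝ f x v = ∑ r, v r * pd f r x := by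
  have hv : v = ∑ r, v r • (Pi.single r (1:ℝ) : Fin n → ℝ) := by
    conv_lhs => rw [← Finset.univ_sum_single v]
    refine Finset.sum_congr rfl fun r _ => ?_
    rw [← Pi.single_smul, smul_eq_mul, mul_one]
  conv_lhs => rw [hv]
  simp [pd, map_sum, smul_eq_mul]

lemma pd_skew {n : ℕ} (π : (Fin n → ℝ) → Fin n → Fin n → ℝ)
    (hskew : ∀ x : Fin n → ℝ, ∀ i j, π x i j = - π x j i)
    (b m : Fin n) (r : Fin n) (x : Fin n → ℝ) :
    pd (fun y => π y b m) r x = - pd (fun y => π y m b) r x := by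
  have h : (fun y => π y b m) = (fun y => -(π y m b)) := by
    funext y; exact hskew y b m
  rw [pd, h, fderiv_fun_neg]
  simp [pd]

lemma key_identity {n : ℕ} (π : (Fin n → ℝ) → Fin n → Fin n → ℝ)
    (hskew : ∀ x : Fin n → ℝ, ∀ i j, π x i j = - π x j i)
    (hjac : ∀ x : Fin n → ℝ, ∀ s l k,
      ∑ r, (π x r s * pd (fun y => π y l k) r x
        + π x r k * pd (fun y => π y s l) r x
        + π x r l * pd (fun y => π y k s) r x) = 0)
    (x : Fin n → ℝ) (e v : Fin n → ℝ)
    (hv : ∀ r, v r + ∑ m, e m * π x m r = 0) (a b : Fin n) :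
    (∑ r, (∑ m, e m * pd (fun y => π y m a) r x) * π x r b)
    + (∑ r, v r * pd (fun y => π y a b) r x)
    + (∑ r, π x a r * (∑ m, e m * pd (fun y => π y m b) r x)) = 0 := by
  have hv' : ∀ r, v r = -∑ m, e m * π x m r := fun r => by linarith [hv r]
  have hS : ∀ m, ∑ r, (pd (fun y => π y m a) r x * π x r b
      - π x m r * pd (fun y => π y a b) r x
      + π x a r * pd (fun y => π y m b) r x) = 0 := by
    intro m
    have hj := hjac x m a b
    rw [← hj]
    refine Finset.sum_congr rfl fun r _ => ?_
    rw [hskew x r m, hskew x r a, pd_skew π hskew b m r x]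
    ring
  have expand : (∑ r, (∑ m, e m * pd (fun y => π y m a) r x) * π x r b)
      + (∑ r, v r * pd (fun y => π y a b) r x)
      + (∑ r, π x a r * (∑ m, e m * pd (fun y => π y m b) r x))
      = ∑ m, e m * ∑ r, (pd (fun y => π y m a) r x * π x r b
        - π x m r * pd (fun y => π y a b) r x
        + π x a r * pd (fun y => π y m b) r x) := by
    have R : (∑ m, e m * ∑ r, (pd (fun y => π y m a) r x * π x r b
        - π x m r * pd (fun y => π y a b) r x
        + π x a r * pd (fun y => π y m b) r x))
        = ∑ r, ∑ m, (e m * pd (fun y => π y m a) r x * π x r b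
          - e m * π x m r * pd (fun y => π y a b) r x
          + π x a r * (e m * pd (fun y => π y m b) r x)) := by
      simp only [Finset.mul_sum]
      rw [Finset.sum_comm]
      refine Finset.sum_congr rfl fun r _ => Finset.sum_congr rfl fun m _ => by ring
    rw [R]
    simp only [hv', Finset.sum_mul, Finset.mul_sum, neg_mul]
    simp only [← Finset.sum_neg_distrib]
    rw [← Finset.sum_add_distrib, ← Finset.sum_add_distrib]
    refine Finset.sum_congr rfl fun r _ => ?_
    rw [← Finset.sum_add_distrib, ← Finset.sum_add_distrib]
    refine Finset.sum_congr rfl fun m _ => by ring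
  rw [expand]
  simp [hS]

lemma sum_helper1 {n : ℕ} (v w : Fin n → ℝ) (S M : Fin n → Fin n → ℝ) :
    ∑ k, ∑ l, (∑ a, v a * S a k) * M k l * w l
      = ∑ a, ∑ b, v a * w b * (∑ r, S a r * M r b) := by
  have h : ∀ a b : Fin n, v a * w b * (∑ r, S a r * M r b)
      = ∑ r, v a * S a r * M r b * w b := by
    intro a b; rw [Finset.mul_sum]; exact Finset.sum_congr rfl fun r _ => by ring
  simp only [h, Finset.sum_mul]
  have e1 : ∑ k : Fin n, ∑ l : Fin n, ∑ a : Fin n, v a * S a k * M k l * w l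
      = ∑ k : Fin n, ∑ a : Fin n, ∑ l : Fin n, v a * S a k * M k l * w l :=
    Finset.sum_congr rfl fun k _ => Finset.sum_comm
  rw [e1, Finset.sum_comm]
  exact Finset.sum_congr rfl fun a _ => Finset.sum_comm

lemma sum_helper2 {n : ℕ} (v w : Fin n → ℝ) (D : Fin n → Fin n → ℝ) :
    ∑ k, ∑ l, v k * D k l * w l = ∑ a, ∑ b, v a * w b * D a b :=
  Finset.sum_congr rfl fun a _ => Finset.sum_congr rfl fun b _ => by ring

lemma sum_helper3 {n : ℕ} (v w : Fin n → ℝ) (M S : Fin n → Fin n → ℝ) :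
    ∑ k, ∑ l, v k * M k l * (∑ b, w b * S b l)
      = ∑ a, ∑ b, v a * w b * (∑ r, M a r * S b r) := by
  have h : ∀ a b : Fin n, v a * w b * (∑ r, M a r * S b r)
      = ∑ r, v a * M a r * (w b * S b r) := by
    intro a b; rw [Finset.mul_sum]; exact Finset.sum_congr rfl fun r _ => by ring
  simp only [h, Finset.mul_sum]
  exact Finset.sum_congr rfl fun k _ => Finset.sum_comm

end Aux

/-- If `π` is a Poisson bivector field, the transported tensor `P = U π Uᵀ` along any
solution `(X,η)` is constant, equal to `π(X(0))`. -/

theorem transported_tensor_constant_of_poisson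
    (n : ℕ) (hn : 1 ≤ n)
    (π : (Fin n → ℝ) → Fin n → Fin n → ℝ) (hπ : ContDiff ℝ (⊤ : ℕ∞) π)
    (hskew : ∀ x : Fin n → ℝ, ∀ i j, π x i j = - π x j i)
    (hjac : ∀ x : Fin n → ℝ, ∀ s l k,
      ∑ r, (π x r s * pd (fun y => π y l k) r x
        + π x r k * pd (fun y => π y s l) r x
        + π x r l * pd (fun y => π y k s) r x) = 0)
    (X X' η : ℝ → Fin n → ℝ) (hsol : IsSol π X X' η)
    (U : ℝ → Fin n → Fin n → ℝ)
    (hU0 : ∀ i j, U 0 i j = if i = j then 1 else 0)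
    (hUode : ∀ u ∈ Icc (0:ℝ) 1, ∀ i j,
      HasDerivWithinAt (fun t => U t i j)
        (∑ l, U u i l * ∑ m, η u m * pd (fun y => π y m l) j (X u)) (Icc 0 1) u) :
    ∀ u ∈ Icc (0:ℝ) 1, ∀ i j,
      (∑ k, ∑ l, U u i k * π (X u) k l * U u j l) = π (X 0) i j := by
  have hcomp : ∀ k l : Fin n, ContDiff ℝ (⊤ : ℕ∞) (fun y => π y k l) := fun k l =>
    contDiff_pi.mp (contDiff_pi.mp hπ k) l
  have hder : ∀ i j : Fin n, ∀ u ∈ Icc (0:ℝ) 1,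
      HasDerivWithinAt (fun v => ∑ k, ∑ l, U v i k * π (X v) k l * U v j l)
        0 (Icc 0 1) u := by
    intro i j u hu
    have hX := hsol.2.2.1 u hu
    have hπd : ∀ k l, HasDerivWithinAt (fun v => π (X v) k l)
        (∑ r, X' u r * pd (fun y => π y k l) r (X u)) (Icc 0 1) u := by
      intro k l
      have hf : HasFDerivAt (fun y => π y k l) (fderiv ℝ (fun y => π y k l) (X u)) (X u) :=
        (((hcomp k l).differentiable (by simp)) (X u)).hasFDerivAt
      have h2 := hf.comp_hasDerivWithinAt u hX
      rw [fderiv_apply_sum] at h2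
      exact h2
    have hbig : HasDerivWithinAt (fun v => ∑ k, ∑ l, U v i k * π (X v) k l * U v j l)
        (∑ k, ∑ l, (((∑ a, U u i a * ∑ m, η u m * pd (fun y => π y m a) k (X u)) * π (X u) k l
            + U u i k * (∑ r, X' u r * pd (fun y => π y k l) r (X u))) * U u j l
          + U u i k * π (X u) k l * (∑ b, U u j b * ∑ m, η u m * pd (fun y => π y m b) l (X u))))
        (Icc 0 1) u := by
      refine HasDerivWithinAt.fun_sum fun k _ => HasDerivWithinAt.fun_sum fun l _ => ?_
      exact ((hUode u hu i k).mul (hπd k l)).mul (hUode u hu j l)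
    have hC : ∀ a b : Fin n,
        (∑ r, (∑ m, η u m * pd (fun y => π y m a) r (X u)) * π (X u) r b)
        + (∑ r, X' u r * pd (fun y => π y a b) r (X u))
        + (∑ r, π (X u) a r * (∑ m, η u m * pd (fun y => π y m b) r (X u))) = 0 :=
      fun a b => key_identity π hskew hjac (X u) (η u) (X' u)
        (fun r => hsol.2.2.2 u hu r) a b
    have hzero : (∑ k, ∑ l, (((∑ a, U u i a * ∑ m, η u m * pd (fun y => π y m a) k (X u)) * π (X u) k l
            + U u i k * (∑ r, X' u r * pd (fun y => π y k l) r (X u))) * U u j l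
          + U u i k * π (X u) k l * (∑ b, U u j b * ∑ m, η u m * pd (fun y => π y m b) l (X u))))
        = 0 := by
      have hsplit : (∑ k, ∑ l, (((∑ a, U u i a * ∑ m, η u m * pd (fun y => π y m a) k (X u)) * π (X u) k l
            + U u i k * (∑ r, X' u r * pd (fun y => π y k l) r (X u))) * U u j l
          + U u i k * π (X u) k l * (∑ b, U u j b * ∑ m, η u m * pd (fun y => π y m b) l (X u))))
          = (∑ k, ∑ l, (∑ a, (fun a => U u i a) a * (fun a r => ∑ m, η u m * pd (fun y => π y m a) r (X u)) a k)
              * π (X u) k l * (fun b => U u j b) l)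
          + (∑ k, ∑ l, (fun a => U u i a) k * (fun k l => ∑ r, X' u r * pd (fun y => π y k l) r (X u)) k l * (fun b => U u j b) l)
          + (∑ k, ∑ l, (fun a => U u i a) k * π (X u) k l
              * (∑ b, (fun b => U u j b) b * (fun b r => ∑ m, η u m * pd (fun y => π y m b) r (X u)) b l)) := by
        simp only []
        rw [← Finset.sum_add_distrib, ← Finset.sum_add_distrib]
        refine Finset.sum_congr rfl fun k _ => ?_
        rw [← Finset.sum_add_distrib, ← Finset.sum_add_distrib]
        refine Finset.sum_congr rfl fun l _ => by ring
      rw [hsplit, sum_helper1, sum_helper2, sum_helper3,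
        ← Finset.sum_add_distrib, ← Finset.sum_add_distrib]
      refine Finset.sum_eq_zero fun a _ => ?_
      rw [← Finset.sum_add_distrib, ← Finset.sum_add_distrib]
      refine Finset.sum_eq_zero fun b _ => ?_
      rw [← mul_add, ← mul_add, hC a b, mul_zero]
    rw [hzero] at hbig
    exact hbig
  have key : ∀ i j : Fin n, ∀ u ∈ Icc (0:ℝ) 1,
      (∑ k, ∑ l, U u i k * π (X u) k l * U u j l)
        = ∑ k, ∑ l, U 0 i k * π (X 0) k l * U 0 j l := by
    intro i j
    refine constant_of_has_deriv_right_zero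
      (f := fun v => ∑ k, ∑ l, U v i k * π (X v) k l * U v j l) ?_ ?_
    · intro u hu
      exact (hder i j u hu).continuousWithinAt
    · intro x hx
      refine (hder i j x (Ico_subset_Icc_self hx)).mono_of_mem_nhdsWithin ?_
      refine mem_nhdsWithin.mpr ⟨Iio 1, isOpen_Iio, hx.2, ?_⟩
      rintro y ⟨hy1, hy2⟩
      exact ⟨hx.1.trans hy2, le_of_lt hy1⟩
  intro u hu i j
  rw [key i j u hu]
  simp [hU0, Finset.sum_ite_eq, Finset.mul_sum, ite_mul, mul_ite]
end

section
/- Let n ≥ 1 and let π : ℝⁿ → Mₙ(ℝ) be smooth. Suppose that for every continuously differentiable X : [0,1] → ℝⁿ and continuous η : [0,1] → ℝⁿ satisfying (X')ⁱ(u) + Σ_j η_j(u) π^{ji}(X(u)) = 0 for all u and i, the matrix P(u) = U(u)·π(X(u))·U(u)ᵀ is skew-symmetric and independent of u ∈ [0,1], where U : [0,1] → Mₙ(ℝ) is the solution of U(0) = I, U'(u) = U(u)·A(u), with A(u)ⁱ_k = Σ_j η_j(u) ∂_k π^{ji}(X(u)). Then π is a Poisson bivector field: π(x) is skew-symmetric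 for all x ∈ ℝⁿ and Σ_{r=1}^n ( π^{rs}(x) ∂_r π^{lk}(x) + π^{rk}(x) ∂_r π^{sl}(x) + π^{rl}(x) ∂_r π^{ks}(x) ) = 0 for all x and all indices s,l,k. -/
open MeasureTheory Set

section PoissonAux

variable {n : ℕ}

lemma aux_entry {π : (Fin n → ℝ) → Fin n → Fin n → ℝ} (hπ : ContDiff ℝ (⊤ : ℕ∞) π) (i j : Fin n) :
    ContDiff ℝ (⊤ : ℕ∞) (fun y => π y i j) :=
  contDiff_pi.mp (contDiff_pi.mp hπ i) j

lemma aux_pd {π : (Fin n → ℝ) → Fin n → Fin n → ℝ} (hπ : ContDiff ℝ (⊤ : ℕ∞) π) (i j k : Fin n) :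
    ContDiff ℝ (⊤ : ℕ∞) (fun y => pd (fun z => π z i j) k y) := by
  unfold pd
  exact (((aux_entry hπ i j).fderiv_right (by simp)).clm_apply contDiff_const)

lemma fderiv_apply_eq_sum (f : (Fin n → ℝ) → ℝ) (x w : Fin n → ℝ) :
    fderiv ℝ f x w = ∑ r, w r * pd f r x := by
  have hw : w = ∑ r, w r • (Pi.single r (1:ℝ) : Fin n → ℝ) := by
    funext j
    simp [Pi.single_apply, Finset.sum_apply]
  conv_lhs => rw [hw]
  rw [map_sum]
  simp [pd, smul_eq_mul]

/-- The joint vector field for the pair `(X, U)` along the constant direction `η = e_s`. -/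
noncomputable def vf (π : (Fin n → ℝ) → Fin n → Fin n → ℝ) (s : Fin n) :
    ((Fin n → ℝ) × (Fin n → Fin n → ℝ)) → ((Fin n → ℝ) × (Fin n → Fin n → ℝ)) :=
  fun p => (fun i => -π p.1 s i, fun i k => ∑ l, p.2 i l * pd (fun y => π y s l) k p.1)

lemma vf_smooth {π : (Fin n → ℝ) → Fin n → Fin n → ℝ} (hπ : ContDiff ℝ (⊤ : ℕ∞) π) (s : Fin n) :
    ContDiff ℝ 1 (vf π s) := by
  refine ContDiff.prodMk ?_ ?_
  · refine contDiff_pi.mpr fun i => ?_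
    exact (((aux_entry hπ s i).comp contDiff_fst).neg).of_le (by simp)
  · refine contDiff_pi.mpr fun i => contDiff_pi.mpr fun k => ?_
    refine (ContDiff.sum (n := ((⊤ : ℕ∞) : WithTop ℕ∞)) fun l _ => ?_).of_le (by simp)
    have h1 : ContDiff ℝ (⊤ : ℕ∞) (fun p : (Fin n → ℝ) × (Fin n → Fin n → ℝ) => p.2 i l) :=
      ((ContinuousLinearMap.proj l).comp ((ContinuousLinearMap.proj i).comp
        (ContinuousLinearMap.snd ℝ (Fin n → ℝ) (Fin n → Fin n → ℝ)))).contDiff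
    exact h1.mul ((aux_pd hπ s l k).comp contDiff_fst)

end PoissonAux

/-- If along every solution `(X,η)` the transported tensor `P = U π Uᵀ` is
skew-symmetric and independent of `u`, then `π` is a Poisson bivector field. -/
theorem poisson_of_transported_tensor_constant_skew
    (n : ℕ) (hn : 1 ≤ n)
    (π : (Fin n → ℝ) → Fin n → Fin n → ℝ) (hπ : ContDiff ℝ (⊤ : ℕ∞) π)
    (h : ∀ X X' η : ℝ → Fin n → ℝ, IsSol π X X' η →
      ∀ U : ℝ → Fin n → Fin n → ℝ,
        (∀ i j, U 0 i j = if i = j then 1 else 0) →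
        (∀ u ∈ Icc (0:ℝ) 1, ∀ i j,
          HasDerivWithinAt (fun t => U t i j)
            (∑ l, U u i l * ∑ m, η u m * pd (fun y => π y m l) j (X u)) (Icc 0 1) u) →
        (∀ u ∈ Icc (0:ℝ) 1, ∀ i j,
          (∑ k, ∑ l, U u i k * π (X u) k l * U u j l) =
            - ∑ k, ∑ l, U u j k * π (X u) k l * U u i l) ∧
        (∀ u ∈ Icc (0:ℝ) 1, ∀ v ∈ Icc (0:ℝ) 1, ∀ i j,
          (∑ k, ∑ l, U u i k * π (X u) k l * U u j l) =
            ∑ k, ∑ l, U v i k * π (X v) k l * U v j l)) :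
    (∀ x : Fin n → ℝ, ∀ i j, π x i j = - π x j i) ∧
    (∀ x : Fin n → ℝ, ∀ s l k,
      ∑ r, (π x r s * pd (fun y => π y l k) r x
        + π x r k * pd (fun y => π y s l) r x
        + π x r l * pd (fun y => π y k s) r x) = 0) := by
  classical
  -- Part 1: skew-symmetry, via the constant solution.
  have skew : ∀ x : Fin n → ℝ, ∀ i j, π x i j = - π x j i := by
    intro x i j
    have h0 : (0:ℝ) ∈ Icc (0:ℝ) 1 := ⟨le_refl 0, zero_le_one⟩
    have hsol : IsSol π (fun _ => x) (fun _ _ => 0) (fun _ _ => 0) := by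
      refine ⟨continuousOn_const, continuousOn_const, fun u hu => ?_, fun u hu i => by simp⟩
      exact (hasDerivWithinAt_const u _ x).congr_deriv (by funext i; simp)
    have hU := h _ _ _ hsol (fun _ i j => if i = j then 1 else 0) (fun i j => rfl)
      (fun u hu i j => by
        have hz : (∑ l, (if i = l then (1:ℝ) else 0) *
            ∑ m, (0:ℝ) * pd (fun y => π y m l) j x) = 0 := by simp
        rw [hz]
        exact hasDerivWithinAt_const u _ _)
    have hsk := hU.1 0 h0 i j
    simpa [ite_mul, mul_ite, Finset.sum_ite_eq, Finset.sum_ite_eq'] using hsk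
  have pdskew : ∀ (i j r : Fin n) (x : Fin n → ℝ),
      pd (fun y => π y i j) r x = - pd (fun y => π y j i) r x := by
    intro i j r x
    have hfun : (fun y => π y i j) = fun y => -(π y j i) := funext fun y => skew y i j
    rw [hfun]
    unfold pd
    rw [fderiv_fun_neg]
    simp
  refine ⟨skew, ?_⟩
  intro x s lI kI
  -- Part 2: the Jacobi identity at `x` in the direction `s`.
  obtain ⟨F, hF0, ε, hε, hF⟩ := ContDiffAt.exists_forall_mem_closedBall_exists_eq_forall_mem_Ioo_hasDerivAt₀
    ((vf_smooth hπ s).contDiffAt (x := (x, fun i j => if i = j then 1 else 0))) 0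
  have key : ∀ a b : Fin n,
      ∑ k, pd (fun y => π y s a) k x * π x k b
      - ∑ r, π x s r * pd (fun y => π y a b) r x
      + ∑ l, π x a l * pd (fun y => π y s b) l x = 0 := by
    set δ : ℝ := ε / 2 with hδdef
    have hδ : 0 < δ := by positivity
    have hmem : ∀ u ∈ Icc (0:ℝ) 1, δ * u ∈ Ioo (0 - ε) (0 + ε) := by
      intro u hu
      constructor
      · nlinarith [hu.1, hu.2]
      · nlinarith [hu.1, hu.2]
    set G : ℝ → (Fin n → ℝ) × (Fin n → Fin n → ℝ) := fun u => F (δ * u) with hGdef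
    set X : ℝ → Fin n → ℝ := fun u => (G u).1 with hXdef
    set U : ℝ → Fin n → Fin n → ℝ := fun u => (G u).2 with hUdef
    set η : ℝ → Fin n → ℝ := fun _ j => if j = s then δ else 0 with hηdef
    set X' : ℝ → Fin n → ℝ := fun u i => -(δ * π (X u) s i) with hX'def
    have hG : ∀ u ∈ Icc (0:ℝ) 1, HasDerivAt G (δ • vf π s (G u)) u := by
      intro u hu
      have hlin : HasDerivAt (fun t : ℝ => δ * t) δ u := by
        simpa using (hasDerivAt_id u).const_mul δ
      have := (hF _ (hmem u hu)).scomp u hlin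
      exact this
    have hXd : ∀ u ∈ Icc (0:ℝ) 1, HasDerivWithinAt X (X' u) (Icc 0 1) u := by
      intro u hu
      have h1 := (ContinuousLinearMap.fst ℝ (Fin n → ℝ)
        (Fin n → Fin n → ℝ)).hasFDerivAt.comp_hasDerivAt u (hG u hu)
      have h2 : HasDerivAt X ((δ • vf π s (G u)).1) u := h1
      refine (h2.hasDerivWithinAt).congr_deriv ?_
      funext i
      simp [vf, Prod.smul_fst, hX'def, hXdef]
    have hUd : ∀ u ∈ Icc (0:ℝ) 1, ∀ i j, HasDerivWithinAt (fun t => U t i j)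
        (∑ l, U u i l * ∑ m, η u m * pd (fun y => π y m l) j (X u)) (Icc 0 1) u := by
      intro u hu i j
      have h1 := ((ContinuousLinearMap.proj j).comp ((ContinuousLinearMap.proj i).comp
          (ContinuousLinearMap.snd ℝ (Fin n → ℝ)
            (Fin n → Fin n → ℝ)))).hasFDerivAt.comp_hasDerivAt u (hG u hu)
      have h2 : HasDerivAt (fun t => U t i j) ((δ • vf π s (G u)).2 i j) u := h1
      refine (h2.hasDerivWithinAt).congr_deriv ?_
      simp only [vf, Prod.smul_snd, Pi.smul_apply, smul_eq_mul, hηdef, ite_mul, zero_mul,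
        Finset.sum_ite_eq', Finset.mem_univ, if_true, Finset.mul_sum]
      refine Finset.sum_congr rfl fun l _ => by ring
    have hU0 : ∀ i j, U 0 i j = if i = j then 1 else 0 := by
      intro i j
      show (F (δ * 0)).2 i j = _
      rw [mul_zero, hF0]
    have hX0 : X 0 = x := by
      show (F (δ * 0)).1 = x
      rw [mul_zero, hF0]
    have hXc : ContinuousOn X (Icc 0 1) := fun u hu => (hXd u hu).continuousWithinAt
    have hX'c : ContinuousOn X' (Icc 0 1) := by
      refine continuousOn_pi.mpr fun i => ?_
      have hc : Continuous (fun y : Fin n → ℝ => π y s i) :=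
        ((continuous_apply i).comp ((continuous_apply s).comp hπ.continuous))
      exact ((continuousOn_const.mul (hc.comp_continuousOn hXc))).neg
    have hsol : IsSol π X X' η := by
      refine ⟨hX'c, continuousOn_const, hXd, fun u hu i => ?_⟩
      simp [hX'def, hηdef, ite_mul, zero_mul, Finset.sum_ite_eq']
    obtain ⟨hsk2, hconst⟩ := h X X' η hsol U hU0 hUd
    have h0 : (0:ℝ) ∈ Icc (0:ℝ) 1 := ⟨le_rfl, zero_le_one⟩
    intro a b
    set P : ℝ → ℝ := fun u => ∑ k, ∑ l, U u a k * π (X u) k l * U u b l with hPdef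
    have hPconst : HasDerivWithinAt P 0 (Icc 0 1) 0 := by
      refine (hasDerivWithinAt_const (0:ℝ) _ (P 0)).congr (fun u hu => ?_) rfl
      exact hconst u hu 0 h0 a b
    set Aval : Fin n → Fin n → ℝ :=
      fun c k => ∑ l, U 0 c l * ∑ m, η 0 m * pd (fun y => π y m l) k (X 0) with hAvaldef
    have hUak : ∀ c k, HasDerivWithinAt (fun t => U t c k) (Aval c k) (Icc 0 1) 0 :=
      fun c k => hUd 0 h0 c k
    have hπkl : ∀ k l, HasDerivWithinAt (fun u => π (X u) k l)
        (∑ r, X' 0 r * pd (fun y => π y k l) r x) (Icc 0 1) 0 := by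
      intro k l
      have hdiff : HasFDerivAt (fun y => π y k l) (fderiv ℝ (fun y => π y k l) (X 0)) (X 0) :=
        ((aux_entry hπ k l).differentiable (by simp) (X 0)).hasFDerivAt
      have h2 := hdiff.comp_hasDerivWithinAt 0 (hXd 0 h0)
      rw [hX0] at h2
      rwa [fderiv_apply_eq_sum] at h2
    have hDer : HasDerivWithinAt P (∑ k, ∑ l,
        ((Aval a k * π x k l + U 0 a k * (∑ r, X' 0 r * pd (fun y => π y k l) r x)) * U 0 b l
          + U 0 a k * π x k l * Aval b l)) (Icc 0 1) 0 := by
      refine HasDerivWithinAt.fun_sum fun k _ => ?_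
      refine HasDerivWithinAt.fun_sum fun l _ => ?_
      have h3 := ((hUak a k).fun_mul (hπkl k l)).fun_mul (hUak b l)
      rw [hX0] at h3
      exact h3
    have heq := hDer.derivWithin (uniqueDiffOn_Icc_zero_one 0 h0)
    have heq0 := hPconst.derivWithin (uniqueDiffOn_Icc_zero_one 0 h0)
    have hzero := heq.symm.trans heq0
    have hAval : ∀ c k, Aval c k = δ * pd (fun y => π y s c) k x := by
      intro c k
      simp [hAvaldef, hU0, hX0, hηdef, ite_mul, zero_mul, one_mul,
        Finset.sum_ite_eq, Finset.sum_ite_eq']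
    have hX'0 : ∀ r, X' 0 r = -(δ * π x s r) := by
      intro r; simp [hX'def, hX0]
    simp only [hAval, hU0, hX'0] at hzero
    simp only [ite_mul, mul_ite, one_mul, zero_mul, mul_one, mul_zero, add_mul,
      Finset.sum_add_distrib, Finset.sum_ite_eq, Finset.sum_ite_eq', Finset.mem_univ,
      if_true, Finset.sum_ite_irrel, Finset.sum_const_zero] at hzero
    have hδzero : δ * (∑ k, pd (fun y => π y s a) k x * π x k b
        - ∑ r, π x s r * pd (fun y => π y a b) r x
        + ∑ l, π x a l * pd (fun y => π y s b) l x) = 0 := by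
      rw [← hzero, mul_add, mul_sub, Finset.mul_sum, Finset.mul_sum, Finset.mul_sum,
        sub_eq_add_neg, ← Finset.sum_neg_distrib]
      congr 1
      congr 1
      all_goals exact Finset.sum_congr rfl fun k _ => by ring
    exact (mul_eq_zero.mp hδzero).resolve_left (ne_of_gt hδ)
  -- Assemble the Jacobi identity from `key` and skew-symmetry.
  have hk := key lI kI
  have e1 : ∑ r, π x r s * pd (fun y => π y lI kI) r x
      = - ∑ r, π x s r * pd (fun y => π y lI kI) r x := by
    rw [← Finset.sum_neg_distrib]
    exact Finset.sum_congr rfl fun r _ => by rw [skew x r s]; ring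
  have e2 : ∑ r, π x r kI * pd (fun y => π y s lI) r x
      = ∑ r, pd (fun y => π y s lI) r x * π x r kI :=
    Finset.sum_congr rfl fun r _ => mul_comm _ _
  have e3 : ∑ r, π x r lI * pd (fun y => π y kI s) r x
      = ∑ r, π x lI r * pd (fun y => π y s kI) r x :=
    Finset.sum_congr rfl fun r _ => by rw [skew x r lI, pdskew kI s]; ring
  rw [Finset.sum_add_distrib, Finset.sum_add_distrib, e1, e2, e3]
  linarith [hk]
end
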